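/- If A ⊆ D is bounded above with respect to ≤', then sup_D A := e₁·sup A₁ + e₂·sup A₂ (where A₁ = {a₁ : e₁a₁ + e₂a₂ ∈ A} and A₂ = {a₂ : e₁a₁ + e₂a₂ ∈ A}) is the least upper bound of A with respect to ≤'. -/
import Mathlib


noncomputable section

/-- Hyperbolic numbers in the idempotent representation: `(α₁, α₂)` stands for
`e₁ α₁ + e₂ α₂`; the ring structure is componentwise, which matches the
hyperbolic multiplication. A number `a + k b` corresponds to `(a + b, a - b)`. -/
abbrev Hyp : Type := ℝ × ℝ

/-- The canonical embedding of `ℝ` into the hyperbolic numbers. -/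
def ρ : ℝ → Hyp := fun a => (a, a)

/-- The hyperbolic imaginary unit `k`, with `k² = 1`, `k ∉ ℝ`. -/
def hk : Hyp := (1, -1)

/-- The idempotent `e₁ = (1 + k)/2`. -/
def e₁ : Hyp := (1, 0)

/-- The idempotent `e₂ = (1 - k)/2`. -/
def e₂ : Hyp := (0, 1)
/-- The set of nonnegative hyperbolic numbers `D⁺ = {e₁ α₁ + e₂ α₂ : α₁, α₂ ≥ 0}`. -/
def Dpos : Set Hyp := {z | ∃ α₁ α₂ : ℝ, 0 ≤ α₁ ∧ 0 ≤ α₂ ∧ z = e₁ * ρ α₁ + e₂ * ρ α₂}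

/-- The partial order `z ≤' u  ↔  u - z ∈ D⁺` on the hyperbolic numbers. -/
def le' : Hyp → Hyp → Prop := fun z u => u - z ∈ Dpos

/-- The hyperbolic supremum: componentwise supremum in the idempotent representation. -/
def supD (A : Set Hyp) : Hyp := e₁ * ρ (sSup (Prod.fst '' A)) + e₂ * ρ (sSup (Prod.snd '' A))

lemma le'_iff (z u : Hyp) : le' z u ↔ z.1 ≤ u.1 ∧ z.2 ≤ u.2 := by
  constructor
  · rintro ⟨α₁, α₂, h₁, h₂, h⟩
    have h1 : u.1 - z.1 = α₁ := by have := congrArg Prod.fst h; simpa [e₁, e₂, ρ] using this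
    have h2 : u.2 - z.2 = α₂ := by have := congrArg Prod.snd h; simpa [e₁, e₂, ρ] using this
    constructor <;> linarith
  · rintro ⟨h₁, h₂⟩
    exact ⟨u.1 - z.1, u.2 - z.2, by linarith, by linarith, by
      simp [e₁, e₂, ρ, Prod.ext_iff]⟩

/-- If `A ⊆ D` is nonempty and bounded above for `≤'`, then
`sup_D A = e₁ sup A₁ + e₂ sup A₂` is the least upper bound of `A` for `≤'`. -/
theorem supD_isLUB (A : Set Hyp) (hne : A.Nonempty)
    (hbdd : ∃ M : Hyp, ∀ a ∈ A, le' a M) :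
    (∀ a ∈ A, le' a (supD A)) ∧ (∀ M : Hyp, (∀ a ∈ A, le' a M) → le' (supD A) M) := by
  obtain ⟨M, hM⟩ := hbdd
  have hsup1 : (supD A).1 = sSup (Prod.fst '' A) := by
    simp [supD, e₁, e₂, ρ]
  have hsup2 : (supD A).2 = sSup (Prod.snd '' A) := by
    simp [supD, e₁, e₂, ρ]
  have hb1 : BddAbove (Prod.fst '' A) := ⟨M.1, by
    rintro x ⟨a, ha, rfl⟩; exact ((le'_iff a M).1 (hM a ha)).1⟩
  have hb2 : BddAbove (Prod.snd '' A) := ⟨M.2, by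
    rintro x ⟨a, ha, rfl⟩; exact ((le'_iff a M).1 (hM a ha)).2⟩
  constructor
  · intro a ha
    rw [le'_iff, hsup1, hsup2]
    exact ⟨le_csSup hb1 ⟨a, ha, rfl⟩, le_csSup hb2 ⟨a, ha, rfl⟩⟩
  · intro N hN
    rw [le'_iff, hsup1, hsup2]
    constructor
    · exact csSup_le (hne.image _) (by rintro x ⟨a, ha, rfl⟩; exact ((le'_iff a N).1 (hN a ha)).1)
    · exact csSup_le (hne.image _) (by rintro x ⟨a, ha, rfl⟩; exact ((le'_iff a N).1 (hN a ha)).2)
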